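/- For every nonnegative integer n, the bipartition numbers satisfy the congruences p₂(5n+2) ≡ 0 (mod 5), p₂(5n+3) ≡ 0 (mod 5), and p₂(5n+4) ≡ 0 (mod 5). -/

import Mathlib

/-!
Write `P = ∑ p(n) qⁿ` and `(q;q)_N = ∏_{i < N} (1 - q^(i+1))`, so that `∑ p₂(n) qⁿ = P²` and
`P · (q;q)_N ≡ 1` modulo `q^(N+1)`. Differentiating Cauchy's q-binomial theorem for
`∏_{k ≤ 2n} (qⁿ - qᵏ x)` at `x = 1` gives the finite Jacobi identity
`(q;q)_n² = ∑_{j ≤ n} (-1)ʲ (2j+1) q^(j(j+1)/2) [2n+1 choose n-j]_q`, and since the Gaussian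
binomials agree with `P` in low degrees, `(q;q)_n³ ≡ ∑_j (-1)ʲ (2j+1) q^(j(j+1)/2)` in low degrees.
In characteristic 5, `(q;q)_N⁵ = (q⁵;q⁵)_N`, so `P² = P⁵ (q;q)³ ≡ P(q⁵) ∑_j (-1)ʲ (2j+1) q^(j(j+1)/2)`.
Finally `j(j+1)/2 mod 5 ∈ {0, 1, 3}`, and `j(j+1)/2 ≡ 3` forces `2j + 1 ≡ 0`, so the coefficients
of `q^m` with `m mod 5 ∈ {2, 3, 4}` vanish.
-/

/-- The bipartition number `p₂(n)`: the number of ordered pairs `(λ, μ)` of partitions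
with `|λ| + |μ| = n`. -/
noncomputable def bipartitionNumber (n : ℕ) : ℕ :=
  Nat.card {x : (Σ a : ℕ, Nat.Partition a) × (Σ b : ℕ, Nat.Partition b) // x.1.1 + x.2.1 = n}

open Finset

lemma Nat.succ_choose_two (a : ℕ) : (a + 1).choose 2 = a.choose 2 + a := by
  rw [Nat.choose_succ_succ', Nat.choose_one_right, add_comm]

lemma Finset.Nat.sum_antidiagonal_succ_eq_add {M : Type*} [AddCommMonoid M] {f g h : ℕ → ℕ → M}
    (N : ℕ) (hf₀ : ∀ b, f 0 (b + 1) = g 0 b) (hf₀' : ∀ a, f (a + 1) 0 = h a 0)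
    (hf : ∀ a b, f (a + 1) (b + 1) = g (a + 1) b + h a (b + 1)) :
    ∑ p ∈ antidiagonal (N + 1), f p.1 p.2 =
      ∑ p ∈ antidiagonal N, g p.1 p.2 + ∑ p ∈ antidiagonal N, h p.1 p.2 := by
  rw [Finset.Nat.sum_antidiagonal_succ]
  cases N with
  | zero => simp [hf₀, hf₀']
  | succ M =>
    rw [Finset.Nat.sum_antidiagonal_succ', Finset.Nat.sum_antidiagonal_succ,
      Finset.Nat.sum_antidiagonal_succ' (f := fun p => h p.1 p.2)]
    simp only [hf, hf₀, hf₀', sum_add_distrib]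
    abel

section QBinomial

variable {S : Type*} [CommRing S] (q : S)

/-- `qBinomial q a b` is the Gaussian binomial coefficient `[a + b choose a]_q`. -/
def qBinomial : ℕ → ℕ → S
  | 0, _ => 1
  | _ + 1, 0 => 1
  | a + 1, b + 1 => qBinomial a (b + 1) + q ^ (a + 1) * qBinomial (a + 1) b

def qPochhammer (n : ℕ) : S := ∏ i ∈ range n, (1 - q ^ (i + 1))

@[simp] lemma qBinomial_zero_left (b : ℕ) : qBinomial q 0 b = 1 := by
  rw [qBinomial]

@[simp] lemma qBinomial_zero_right (a : ℕ) : qBinomial q a 0 = 1 := by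
  cases a <;> rw [qBinomial]

lemma qBinomial_succ_succ (a b : ℕ) :
    qBinomial q (a + 1) (b + 1) = qBinomial q a (b + 1) + q ^ (a + 1) * qBinomial q (a + 1) b := by
  rw [qBinomial]

lemma qBinomial_one_right (a : ℕ) : qBinomial q a 1 = ∑ i ∈ range (a + 1), q ^ i := by
  induction a with
  | zero => simp
  | succ a ih =>
    rw [qBinomial_succ_succ, ih, qBinomial_zero_right, mul_one, sum_range_succ _ (a + 1)]

lemma qBinomial_one_left (b : ℕ) : qBinomial q 1 b = ∑ i ∈ range (b + 1), q ^ i := by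
  induction b with
  | zero => simp
  | succ b ih =>
    rw [qBinomial_succ_succ, ih, qBinomial_zero_left, zero_add, pow_one,
      geom_sum_succ (n := b + 1), add_comm]

lemma qBinomial_succ_succ' (a b : ℕ) :
    qBinomial q (a + 1) (b + 1) = qBinomial q (a + 1) b + q ^ (b + 1) * qBinomial q a (b + 1) := by
  induction a generalizing b with
  | zero =>
    rw [zero_add, qBinomial_one_left, qBinomial_one_left, qBinomial_zero_left, mul_one,
      sum_range_succ _ (b + 1)]
  | succ a iha =>
    induction b with
    | zero =>
      rw [qBinomial_one_right, qBinomial_one_right, qBinomial_zero_right, zero_add, pow_one,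
        geom_sum_succ, add_comm]
    | succ b ihb =>
      linear_combination qBinomial_succ_succ q (a + 1) (b + 1) + iha (b + 1) + q ^ (a + 2) * ihb
        - qBinomial_succ_succ q (a + 1) b - q ^ (b + 2) * qBinomial_succ_succ q a (b + 1)

lemma qBinomial_comm (a b : ℕ) : qBinomial q a b = qBinomial q b a := by
  induction a generalizing b with
  | zero => simp
  | succ a iha =>
    induction b with
    | zero => simp
    | succ b ihb => rw [qBinomial_succ_succ, qBinomial_succ_succ', iha, ihb]

lemma map_qBinomial {T : Type*} [CommRing T] (f : S →+* T) (a b : ℕ) :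
    f (qBinomial q a b) = qBinomial (f q) a b := by
  induction a generalizing b with
  | zero => simp
  | succ a iha =>
    induction b with
    | zero => simp
    | succ b ihb =>
      rw [qBinomial_succ_succ, qBinomial_succ_succ, map_add, map_mul, map_pow, iha, ihb]

lemma qPochhammer_succ (n : ℕ) : qPochhammer q (n + 1) = qPochhammer q n * (1 - q ^ (n + 1)) :=
  prod_range_succ _ _

lemma qBinomial_mul_qPochhammer_mul_qPochhammer (a b : ℕ) :
    qBinomial q a b * qPochhammer q a * qPochhammer q b = qPochhammer q (a + b) := by
  induction a generalizing b with
  | zero => simp [qPochhammer]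
  | succ a iha =>
    induction b with
    | zero => simp [qPochhammer]
    | succ b ihb =>
      have h := iha (b + 1)
      rw [qPochhammer_succ _ b, ← add_assoc] at h
      rw [← add_assoc, qPochhammer_succ _ (a + 1 + b), qBinomial_succ_succ, qPochhammer_succ _ b]
      rw [qPochhammer_succ _ a, add_right_comm a 1 b] at ihb ⊢
      linear_combination q ^ (a + 1) * (1 - q ^ (b + 1)) * ihb + (1 - q ^ (a + 1)) * h

theorem prod_sub_pow_mul_eq_sum_qBinomial (N : ℕ) (y z : S) :
    ∏ k ∈ range N, (z - q ^ k * y) = ∑ p ∈ antidiagonal N,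
      (-1) ^ p.1 * q ^ p.1.choose 2 * qBinomial q p.1 p.2 * y ^ p.1 * z ^ p.2 := by
  induction N generalizing y with
  | zero => simp
  | succ N ih =>
    rw [prod_range_succ', prod_congr rfl fun k _ => by rw [pow_succ, mul_assoc], ih (q * y),
      sum_mul, Finset.Nat.sum_antidiagonal_succ_eq_add N
        (f := fun a b => (-1) ^ a * q ^ a.choose 2 * qBinomial q a b * y ^ a * z ^ b)
        (g := fun a b => (-1) ^ a * q ^ a.choose 2 * qBinomial q a b * (q * y) ^ a * z ^ b * z)
        (h := fun a b => (-1) ^ a * q ^ a.choose 2 * qBinomial q a b * (q * y) ^ a * z ^ b * -y),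
      ← sum_add_distrib]
    · exact sum_congr rfl fun p _ => by ring
    · intro b
      simp [pow_succ]
    · intro a
      simp only [qBinomial_zero_right, Nat.succ_choose_two]
      ring
    · intro a b
      simp only [qBinomial_succ_succ, Nat.succ_choose_two]
      ring

lemma qPochhammer_pow_char (p : ℕ) [Fact p.Prime] [CharP S p] (n : ℕ) :
    qPochhammer q n ^ p = qPochhammer (q ^ p) n := by
  simp only [qPochhammer, ← prod_pow, sub_pow_char, one_pow, ← pow_mul, mul_comm]

end QBinomial

section FiniteJacobi

variable {S : Type*} [CommRing S] (q : S)

lemma prod_range_pow_sub_pow (n : ℕ) :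
    ∏ k ∈ range n, (q ^ n - q ^ k) = (-1) ^ n * q ^ n.choose 2 * qPochhammer q n := by
  have h : ∀ k ∈ range n, q ^ n - q ^ (n - 1 - k) = -1 * q ^ (n - 1 - k) * (1 - q ^ (k + 1)) := by
    intro k hk
    have e : q ^ n = q ^ (n - 1 - k) * q ^ (k + 1) := by
      rw [← pow_add]; congr 1; have := mem_range.1 hk; omega
    rw [e]
    ring
  rw [← prod_range_reflect, prod_congr rfl h, prod_mul_distrib, prod_mul_distrib, prod_const,
    card_range, prod_pow_eq_pow_sum, sum_range_reflect (fun k => k), sum_range_id,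
    ← Nat.choose_two_right, qPochhammer]

open Polynomial in
lemma derivative_prod_sub_pow_mul_X_eval_one (n : ℕ) :
    (derivative (∏ k ∈ range (2 * n + 1), (C (q ^ n) - C q ^ k * X))).eval 1 =
      -(-1) ^ n * q ^ (n + n.choose 2 + n * n) * qPochhammer q n ^ 2 := by
  have hA : (∏ k ∈ range n, (C (q ^ n) - C q ^ k * X)).eval 1 =
      (-1) ^ n * q ^ n.choose 2 * qPochhammer q n := by
    simp [eval_prod, prod_range_pow_sub_pow]
  have hB : (∏ k ∈ range n, (C (q ^ n) - C q ^ (n + (k + 1)) * X)).eval 1 =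
      q ^ (n * n) * qPochhammer q n := by
    calc _ = ∏ k ∈ range n, (q ^ n * (1 - q ^ (k + 1))) := by
          simp only [eval_prod, eval_sub, eval_mul, eval_pow, eval_C, eval_X, mul_one]
          exact prod_congr rfl fun k _ => by ring
      _ = _ := by rw [prod_mul_distrib, prod_const, card_range, ← pow_mul, qPochhammer]
  rw [show 2 * n + 1 = n + (n + 1) by ring, prod_range_add, prod_range_succ', derivative_mul,
    derivative_mul]
  simp only [eval_add, eval_mul, hA, hB]
  simp only [← C_pow, derivative_sub, derivative_C, derivative_mul, derivative_X, eval_sub,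
    eval_mul, eval_C, eval_X, zero_mul, add_zero, mul_one, zero_add, sub_self, mul_zero, zero_sub,
    eval_neg]
  ring

lemma sum_antidiagonal_neg_one_pow_mul_qBinomial (n : ℕ) :
    ∑ p ∈ antidiagonal (2 * n + 1),
        (-1) ^ p.1 * (p.1 : S) * q ^ (p.1.choose 2 + n * p.2) * qBinomial q p.1 p.2 =
      -(-1) ^ n * q ^ (n + n.choose 2 + n * n) * ∑ j ∈ range (n + 1),
        (-1) ^ j * (2 * j + 1) * q ^ (j + 1).choose 2 * qBinomial q (n - j) (n + 1 + j) := by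
  rw [Finset.Nat.sum_antidiagonal_eq_sum_range_succ
      (fun s r => (-1) ^ s * (s : S) * q ^ (s.choose 2 + n * r) * qBinomial q s r),
    show (2 * n + 1).succ = (n + 1) + (n + 1) by omega, sum_range_add, ← sum_range_reflect,
    ← sum_add_distrib, mul_sum]
  -- the terms `s = n - j` and `s = n + 1 + j` carry the same power of `q`
  refine sum_congr rfl fun j hj => ?_
  obtain ⟨a, rfl⟩ : ∃ a, n = a + j := ⟨n - j, by have := mem_range.1 hj; omega⟩
  set e := a + j + (a + j).choose 2 + (a + j) * (a + j) + (j + 1).choose 2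
  have he₁ : a.choose 2 + (a + j) * (a + j + 1 + j) = e := by
    apply Nat.cast_injective (R := ℚ); push_cast [e, Nat.cast_choose_two]; ring
  have he₂ : (a + j + 1 + j).choose 2 + (a + j) * a = e := by
    apply Nat.cast_injective (R := ℚ); push_cast [e, Nat.cast_choose_two]; ring
  have hsq : ((-1 : S) ^ j) ^ 2 = 1 := by rw [← pow_mul, pow_mul', neg_one_sq, one_pow]
  rw [show a + j + 1 - 1 - j = a by omega, show 2 * (a + j) + 1 - a = a + j + 1 + j by omega,
    show 2 * (a + j) + 1 - (a + j + 1 + j) = a by omega, Nat.add_sub_cancel, he₁, he₂,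
    qBinomial_comm q (a + j + 1 + j)]
  push_cast
  linear_combination (-(-1) ^ a * a * q ^ e * qBinomial q a (a + j + 1 + j)) * hsq

open Polynomial in
theorem qPochhammer_sq_eq_sum (hq : IsLeftRegular q) (n : ℕ) :
    qPochhammer q n ^ 2 = ∑ j ∈ range (n + 1),
      (-1) ^ j * (2 * j + 1) * q ^ (j + 1).choose 2 * qBinomial q (n - j) (n + 1 + j) := by
  have h := congrArg (fun p => (derivative p).eval 1)
    (prod_sub_pow_mul_eq_sum_qBinomial (C q) (2 * n + 1) X (C (q ^ n)))
  simp only [derivative_prod_sub_pow_mul_X_eval_one, derivative_sum, eval_finsetSum] at h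
  simp only [neg_mul, ← C_pow, ← map_qBinomial, X_pow_mul_assoc_C, derivative_mul,
    derivative_pow, map_natCast, derivative_neg, derivative_one, neg_zero, mul_zero, zero_mul,
    derivative_C, add_zero, derivative_X, mul_one, zero_add, eval_mul, eval_pow, eval_neg, eval_one,
    eval_C, eval_natCast, eval_X, one_pow] at h
  rw [sum_congr rfl fun p _ => show (-1) ^ p.1 * q ^ p.1.choose 2 * qBinomial q p.1 p.2 *
      (q ^ n) ^ p.2 * (p.1 : S) = (-1) ^ p.1 * (p.1 : S) * q ^ (p.1.choose 2 + n * p.2) *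
      qBinomial q p.1 p.2 by ring, sum_antidiagonal_neg_one_pow_mul_qBinomial] at h
  exact ((isUnit_neg_one.pow n).isRegular.left.mul (hq.pow (n + n.choose 2 + n * n)))
    (by linear_combination -h)

end FiniteJacobi

open PowerSeries

section Truncation

variable {R : Type*} [CommRing R]

noncomputable abbrev modXPow (n : ℕ) : R⟦X⟧ →+* R⟦X⟧ ⧸ Ideal.span {(X : R⟦X⟧) ^ n} :=
  Ideal.Quotient.mk _

lemma modXPow_eq_iff {n : ℕ} {f g : R⟦X⟧} :
    modXPow n f = modXPow n g ↔ ∀ i < n, coeff i f = coeff i g := by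
  simp only [Ideal.Quotient.eq, Ideal.mem_span_singleton, X_pow_dvd_iff, map_sub, sub_eq_zero]

lemma modXPow_X_pow {n k : ℕ} (h : n ≤ k) : modXPow n (X ^ k : R⟦X⟧) = 0 :=
  Ideal.Quotient.eq_zero_iff_mem.2 (Ideal.mem_span_singleton.2 (pow_dvd_pow X h))

lemma modXPow_expand {p : ℕ} (hp : p ≠ 0) {n : ℕ} {f g : R⟦X⟧} (h : modXPow n f = modXPow n g) :
    modXPow n (expand p hp f) = modXPow n (expand p hp g) := by
  rw [modXPow_eq_iff] at h ⊢
  intro i hi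
  simp only [coeff_expand]
  split_ifs
  · exact h _ ((Nat.div_le_self i p).trans_lt hi)
  · rfl

lemma expand_qPochhammer_X {p : ℕ} (hp : p ≠ 0) (n : ℕ) :
    expand p hp (qPochhammer (X : R⟦X⟧) n) = qPochhammer (X ^ p) n := by
  simp only [qPochhammer, map_prod, map_sub, map_one, map_pow, expand_X]

lemma coeff_mul_expand_eq_zero {p : ℕ} (hp : p ≠ 0) {f : R⟦X⟧} {m : ℕ}
    (hf : ∀ i ≤ m, i % p = m % p → coeff i f = 0) (g : R⟦X⟧) :
    coeff m (f * expand p hp g) = 0 := by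
  refine (coeff_mul _ _ _).trans (sum_eq_zero fun ⟨i, k⟩ hik => ?_)
  rw [HasAntidiagonal.mem_antidiagonal] at hik
  rw [coeff_expand]
  split_ifs with hk
  · obtain ⟨c, rfl⟩ := hk
    rw [hf i (by omega) (by rw [← hik, Nat.add_mul_mod_self_left]), zero_mul]
  · rw [mul_zero]

end Truncation

section Partitions

variable (R : Type*) [CommRing R]

noncomputable def partitionSeries : R⟦X⟧ := PowerSeries.mk fun n => (Fintype.card n.Partition : R)

variable {R}

open scoped PowerSeries.WithPiTopology in
lemma mk_card_restricted_le_mul_qPochhammer (N : ℕ) :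
    PowerSeries.mk (fun d => (#(Nat.Partition.restricted d (· ≤ N)) : R)) * qPochhammer X N = 1 := by
  let : TopologicalSpace R := ⊥
  have : DiscreteTopology R := ⟨rfl⟩
  rw [(Nat.Partition.hasProd_powerSeriesMk_card_restricted R (· ≤ N)).unique
    (hasProd_prod_of_ne_finset_one (s := range N) fun i hi => by rw [if_neg (by simpa using hi)]),
    qPochhammer, ← prod_mul_distrib]
  refine prod_eq_one fun i hi => ?_
  rw [if_pos (by simpa using hi)]
  simp_rw [pow_mul]
  exact WithPiTopology.tsum_pow_mul_one_sub_of_constantCoeff_eq_zero (by simp)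

lemma modXPow_partitionSeries_mul_qPochhammer {m N : ℕ} (h : m ≤ N) :
    modXPow (m + 1) (partitionSeries R) * modXPow (m + 1) (qPochhammer X N) = 1 := by
  rw [← map_one (modXPow (m + 1)), ← mk_card_restricted_le_mul_qPochhammer N, map_mul]
  congr 1
  refine modXPow_eq_iff.2 fun i hi => ?_
  rw [partitionSeries, coeff_mk, coeff_mk, Nat.Partition.restricted,
    filter_true_of_mem fun p _ j hj => (Nat.Partition.le_of_mem_parts hj).trans (by omega),
    card_univ]

lemma modXPow_qBinomial_X {m a b : ℕ} (ha : m ≤ a) (hb : m ≤ b) :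
    modXPow (m + 1) (qBinomial X a b) = modXPow (m + 1) (partitionSeries R) := by
  have h := congrArg (modXPow (R := R) (m + 1)) (qBinomial_mul_qPochhammer_mul_qPochhammer X a b)
  simp only [map_mul] at h
  have hPa := modXPow_partitionSeries_mul_qPochhammer (R := R) ha
  have hPb := modXPow_partitionSeries_mul_qPochhammer (R := R) hb
  have hPab := modXPow_partitionSeries_mul_qPochhammer (R := R) (by omega : m ≤ a + b)
  set P := modXPow (m + 1) (partitionSeries R)
  set G := modXPow (m + 1) (qBinomial (X : R⟦X⟧) a b)
  -- `G = G (P φ_a) (P φ_b) = P (P φ_(a+b)) = P`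
  linear_combination (-G * P * modXPow (m + 1) (qPochhammer X b)) * hPa - G * hPb + P ^ 2 * h +
    P * hPab

lemma bipartitionNumber_eq_sum_antidiagonal (n : ℕ) :
    bipartitionNumber n =
      ∑ p ∈ antidiagonal n, Fintype.card p.1.Partition * Fintype.card p.2.Partition := by
  let e : {x : (Σ a : ℕ, Nat.Partition a) × (Σ b : ℕ, Nat.Partition b) // x.1.1 + x.2.1 = n} ≃
      Σ p : antidiagonal n, p.1.1.Partition × p.1.2.Partition :=
    { toFun x := ⟨⟨(x.1.1.1, x.1.2.1), HasAntidiagonal.mem_antidiagonal.2 x.2⟩, (x.1.1.2, x.1.2.2)⟩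
      invFun y := ⟨(⟨_, y.2.1⟩, ⟨_, y.2.2⟩), HasAntidiagonal.mem_antidiagonal.1 y.1.2⟩ }
  rw [bipartitionNumber, Nat.card_congr e, Nat.card_eq_fintype_card, Fintype.card_sigma,
    ← sum_coe_sort (antidiagonal n)]
  simp only [Fintype.card_prod]

lemma coeff_partitionSeries_sq (n : ℕ) :
    coeff n (partitionSeries R ^ 2) = (bipartitionNumber n : R) := by
  simp [sq, coeff_mul, bipartitionNumber_eq_sum_antidiagonal, partitionSeries]

end Partitions

section Jacobi

variable (R : Type*) [CommRing R]

noncomputable def jacobiPartialSum (m : ℕ) : R⟦X⟧ :=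
  ∑ j ∈ range (m + 1), monomial ((j + 1).choose 2) ((-1 : R) ^ j * (2 * j + 1))

variable {R}

lemma modXPow_qPochhammer_X_sq {m n : ℕ} (h : 2 * m ≤ n) :
    modXPow (m + 1) (qPochhammer (X : R⟦X⟧) n ^ 2) =
      modXPow (m + 1) (partitionSeries R * jacobiPartialSum R m) := by
  rw [qPochhammer_sq_eq_sum X X_mul_injective, jacobiPartialSum, mul_sum, map_sum, map_sum,
    ← sum_subset (range_subset_range.2 (by omega : m + 1 ≤ n + 1))]
  · refine sum_congr rfl fun j hj => ?_
    have hj : j ≤ m := Nat.lt_succ_iff.1 (mem_range.1 hj)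
    simp only [map_mul, modXPow_qBinomial_X (R := R) (m := m) (a := n - j) (b := n + 1 + j)
      (by omega) (by omega), monomial_eq_C_mul_X_pow, map_pow, map_neg, map_one, map_add,
      map_natCast, map_ofNat]
    ring
  · intro j _ hj
    have hT : m + 1 ≤ (j + 1).choose 2 := by
      rw [Nat.succ_choose_two]; have := mem_range.not.1 hj; omega
    rw [map_mul, map_mul, modXPow_X_pow hT, mul_zero, zero_mul]

lemma modXPow_qPochhammer_X_cube {m n : ℕ} (h : 2 * m ≤ n) :
    modXPow (m + 1) (qPochhammer (X : R⟦X⟧) n ^ 3) = modXPow (m + 1) (jacobiPartialSum R m) := by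
  rw [pow_succ (qPochhammer _ n), map_mul, modXPow_qPochhammer_X_sq h, map_mul]
  linear_combination modXPow (m + 1) (jacobiPartialSum R m) *
    modXPow_partitionSeries_mul_qPochhammer (R := R) (by omega : m ≤ n)

lemma five_dvd_two_mul_add_one {j : ℕ} (h : 2 ≤ (j + 1).choose 2 % 5) : 5 ∣ 2 * j + 1 := by
  have h2 : 2 * (j + 1).choose 2 = (j + 1) * j := by
    apply Nat.cast_injective (R := ℚ); push_cast [Nat.cast_choose_two]; ring
  have key : ∀ t x : ZMod 5, 2 * t = (x + 1) * x → 2 ≤ t.val → 2 * x + 1 = 0 := by decide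
  rw [← ZMod.natCast_eq_zero_iff]
  push_cast
  exact key ((j + 1).choose 2) j (by exact_mod_cast congrArg (Nat.cast : ℕ → ZMod 5) h2)
    (by rwa [ZMod.val_natCast])

lemma coeff_jacobiPartialSum_eq_zero [CharP R 5] (m : ℕ) {i : ℕ} (hi : 2 ≤ i % 5) :
    coeff i (jacobiPartialSum R m) = 0 := by
  rw [jacobiPartialSum, map_sum]
  refine sum_eq_zero fun j _ => ?_
  rw [coeff_monomial]
  split_ifs with hij
  · subst hij
    have := (CharP.cast_eq_zero_iff R 5 _).2 (five_dvd_two_mul_add_one hi)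
    push_cast at this
    rw [this, mul_zero]
  · rfl

end Jacobi

theorem modXPow_partitionSeries_sq {R : Type*} [CommRing R] [CharP R 5] (m : ℕ) :
    modXPow (m + 1) (partitionSeries R ^ 2) =
      modXPow (m + 1) (jacobiPartialSum R m * expand 5 (by norm_num) (partitionSeries R)) := by
  have : Fact (Nat.Prime 5) := ⟨Nat.prime_five⟩
  have : CharP R⟦X⟧ 5 := charP_of_injective_algebraMap C_injective 5
  have h5 : (5 : ℕ) ≠ 0 := by norm_num
  have hP := modXPow_partitionSeries_mul_qPochhammer (R := R) (by omega : m ≤ 2 * m)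
  have hE := modXPow_expand h5 (n := m + 1) (f := partitionSeries R * qPochhammer X (2 * m))
    (g := 1) (by rw [map_mul, map_one, hP])
  have hv := congrArg (modXPow (m + 1))
    ((qPochhammer_pow_char X 5 (2 * m)).trans (expand_qPochhammer_X (R := R) h5 _).symm)
  have hJ := modXPow_qPochhammer_X_cube (R := R) (le_refl (2 * m))
  simp only [map_pow, map_mul, map_one] at hE hv hJ ⊢
  set p := modXPow (m + 1) (partitionSeries R)
  set u := modXPow (m + 1) (qPochhammer (X : R⟦X⟧) (2 * m))
  set e := modXPow (m + 1) (expand 5 h5 (partitionSeries R))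
  -- `P² = P² · P(q⁵) (q;q)⁵ = P(q⁵) (P (q;q))² (q;q)³`
  linear_combination (-p ^ 2) * hE - p ^ 2 * e * hv + e * u ^ 3 * (p * u + 1) * hP + e * hJ

theorem five_dvd_bipartitionNumber {m : ℕ} (hm : 2 ≤ m % 5) : 5 ∣ bipartitionNumber m := by
  rw [← ZMod.natCast_eq_zero_iff, ← coeff_partitionSeries_sq,
    modXPow_eq_iff.1 (modXPow_partitionSeries_sq m) m m.lt_succ_self]
  exact coeff_mul_expand_eq_zero _ (fun i _ hi => coeff_jacobiPartialSum_eq_zero m (hi ▸ hm)) _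

/-- Ramanujan-type congruences for the bipartition number:
`p₂(5n+2) ≡ p₂(5n+3) ≡ p₂(5n+4) ≡ 0 (mod 5)`. -/
theorem bipartitionNumber_congruences (n : ℕ) :
    bipartitionNumber (5 * n + 2) % 5 = 0 ∧
    bipartitionNumber (5 * n + 3) % 5 = 0 ∧
    bipartitionNumber (5 * n + 4) % 5 = 0 :=
  ⟨Nat.mod_eq_zero_of_dvd (five_dvd_bipartitionNumber (by omega)),
    Nat.mod_eq_zero_of_dvd (five_dvd_bipartitionNumber (by omega)),
    Nat.mod_eq_zero_of_dvd (five_dvd_bipartitionNumber (by omega))⟩
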